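/- Let m ≥ 1, n ≥ 1 and let G = C₄ₙᵐ × C₂ be the direct product of m copies of the cyclic group of order 4n (with generators a₁,…,a_m) and a cyclic group of order 2 (with generator h). In 𝔽₂[G], let u_m = ∏_{i=1}^{m} (a_iⁿ + a_i^{2n} + a_i^{3n}) and u = 1 + h·u_m. Then the minimum distance of the code generated by u equals 2·3^{m/2} when m is even and equals 4·3^{(m-1)/2} when m is odd. -/

import Mathlib

noncomputable section

open MonoidAlgebra

/-- The code generated by `u` in a group algebra: the `R`-span of `{g • u : g ∈ G}`. -/
def codeGen {R : Type*} [CommSemiring R] {G : Type*} [Monoid G]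
    (u : MonoidAlgebra R G) : Submodule R (MonoidAlgebra R G) :=
  Submodule.span R (Set.range fun g : G => MonoidAlgebra.of R G g * u)

/-- The weight (support size) of an element of a group algebra. -/
def wt {R : Type*} [Semiring R] {G : Type*} (x : MonoidAlgebra R G) : ℕ :=
  x.coeff.support.card

/-- The minimum distance of the code generated by `u`: the least weight of a nonzero
element of the code. -/
def minDist {R : Type*} [CommSemiring R] {G : Type*} [Monoid G]
    (u : MonoidAlgebra R G) : ℕ :=
  sInf {n | ∃ x ∈ codeGen u, x ≠ 0 ∧ wt x = n}

/-- The group `C₄ₙᵐ × C₂`, written multiplicatively. -/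
abbrev Gp (n m : ℕ) : Type := Multiplicative ((Fin m → ZMod (4 * n)) × ZMod 2)

/-- The generator `aᵢ` of the `i`-th copy of `C₄ₙ`. -/
def agen (n m : ℕ) (i : Fin m) : Gp n m := Multiplicative.ofAdd (Pi.single i 1, 0)

/-- The generator `h` of the `C₂` factor. -/
def hgen (n m : ℕ) : Gp n m := Multiplicative.ofAdd (0, 1)

/-- `u_m = ∏ᵢ (aᵢⁿ + aᵢ²ⁿ + aᵢ³ⁿ)` in `𝔽₂[C₄ₙᵐ × C₂]`. -/
def um (n m : ℕ) : MonoidAlgebra (ZMod 2) (Gp n m) :=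
  ∏ i : Fin m,
    (of (ZMod 2) (Gp n m) (agen n m i) ^ n + of (ZMod 2) (Gp n m) (agen n m i) ^ (2 * n) +
      of (ZMod 2) (Gp n m) (agen n m i) ^ (3 * n))

/-- `u = 1 + h·u_m`. -/
def uu (n m : ℕ) : MonoidAlgebra (ZMod 2) (Gp n m) :=
  1 + of (ZMod 2) (Gp n m) (hgen n m) * um n m

/-!
Since `h² = 1` and `u_m² = 1` (each factor `sᵢ = aᵢⁿ + aᵢ²ⁿ + aᵢ³ⁿ` squares to `1` in
characteristic `2`), every codeword `y·u` equals `r·u = r + h·(r·u_m)` for some `r` supported on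
`C₄ₙᵐ`, whose weight is `wt r + wt (r·u_m)`.

Lower bound: for `w = ∏_{i ∈ S} sᵢ` and `r ≠ 0`, the pair `(wt r, wt (r·w))` dominates a corner
of level `|S|`: `(3ⁱ, 3ʲ)` with `i + j = |S|` or `(2·3ⁱ, 2·3ʲ)` with `i + j + 1 = |S|`. To add a
factor `sᵢ`, cut `r` into four slices along the cosets of `⟨aᵢⁿ⟩`: multiplication by `sᵢ` replaces
each slice by the sum of the other three, and the corners of a slice and of the sum of the other
three slices add up to a corner of the next level.

Upper bound: `r = ∏_{i ∈ T} sᵢ` with `|T| = ⌊m/2⌋`, multiplied by `1 + a_{i₀}²ⁿ` (`i₀ ∉ T`) when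
`m` is odd, has `r·u_m = ∏_{i ∉ T} sᵢ` (times the same factor), and weights multiply across
coordinates.
-/

open scoped Pointwise

def Corner (k a b : ℕ) : Prop :=
  (∃ i j, i + j = k ∧ a = 3 ^ i ∧ b = 3 ^ j) ∨
    (∃ i j, i + j + 1 = k ∧ a = 2 * 3 ^ i ∧ b = 2 * 3 ^ j)

theorem three_mul_pow_le_pow {i j : ℕ} (h : i < j) : 3 * 3 ^ i ≤ 3 ^ j := by
  rw [← pow_succ']
  exact Nat.pow_le_pow_right (by norm_num) h

theorem three_pow_add_three_pow_le (i j : ℕ) :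
    3 ^ ((i + j) / 2) + 3 ^ ((i + j + 1) / 2) ≤ 3 ^ i + 3 ^ j := by
  wlog hij : i ≤ j generalizing i j
  · rw [add_comm i j, add_comm (3 ^ i)]
    exact this j i (by omega)
  have hy : 3 ^ i ≤ 3 ^ ((i + j) / 2) := Nat.pow_le_pow_right (by norm_num) (by omega)
  have hz : 3 ^ i ≤ 3 ^ ((i + j + 1) / 2) := Nat.pow_le_pow_right (by norm_num) (by omega)
  have hprod : 3 ^ i * 3 ^ j = 3 ^ ((i + j) / 2) * 3 ^ ((i + j + 1) / 2) := by
    rw [← pow_add, ← pow_add]; congr 1; omega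
  have : 0 < 3 ^ i := by positivity
  -- `x = 3 ^ i` is at most both middle powers `y`, `z`, and `x * 3 ^ j = y * z`;
  -- expand `(y - x) * (z - x) ≥ 0`.
  nlinarith [Nat.mul_le_mul (Nat.sub_le_sub_right hy (3 ^ i)) (Nat.sub_le_sub_right hz (3 ^ i))]

namespace Corner

variable {k a b a₁ b₁ a₂ b₂ : ℕ}

theorem zero : Corner 0 1 1 := .inl ⟨0, 0, rfl, rfl, rfl⟩

theorem succ_left (h : Corner k a b) : Corner (k + 1) (3 * a) b := by
  rcases h with ⟨i, j, rfl, rfl, rfl⟩ | ⟨i, j, rfl, rfl, rfl⟩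
  · exact .inl ⟨i + 1, j, by omega, by ring, rfl⟩
  · exact .inr ⟨i + 1, j, by omega, by ring, rfl⟩

theorem succ_right (h : Corner k a b) : Corner (k + 1) a (3 * b) := by
  rcases h with ⟨i, j, rfl, rfl, rfl⟩ | ⟨i, j, rfl, rfl, rfl⟩
  · exact .inl ⟨i, j + 1, by omega, rfl, by ring⟩
  · exact .inr ⟨i, j + 1, by omega, rfl, by ring⟩

theorem exists_succ_le_two_mul (h : Corner k a b) :
    ∃ a' b', Corner (k + 1) a' b' ∧ a' ≤ 2 * a ∧ b' ≤ 2 * b := by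
  rcases h with ⟨i, j, rfl, rfl, rfl⟩ | ⟨i, j, rfl, rfl, rfl⟩
  · exact ⟨_, _, .inr ⟨i, j, rfl, rfl, rfl⟩, le_rfl, le_rfl⟩
  · refine ⟨3 ^ (i + 1), 3 ^ (j + 1), .inl ⟨i + 1, j + 1, by omega, rfl, rfl⟩, ?_, ?_⟩ <;>
      rw [pow_succ] <;> omega

theorem eq_or_two_mul_le (h₁ : Corner k a₁ b₁) (h₂ : Corner k a₂ b₂) :
    (a₁ = a₂ ∧ b₁ = b₂) ∨ 2 * a₁ ≤ a₂ ∨ 2 * a₂ ≤ a₁ ∨ 2 * b₁ ≤ b₂ ∨ 2 * b₂ ≤ b₁ := by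
  rcases h₁ with ⟨i₁, j₁, hk₁, rfl, rfl⟩ | ⟨i₁, j₁, hk₁, rfl, rfl⟩ <;>
    rcases h₂ with ⟨i₂, j₂, hk₂, rfl, rfl⟩ | ⟨i₂, j₂, hk₂, rfl, rfl⟩ <;>
    rcases lt_trichotomy i₁ i₂ with hi | rfl | hi <;>
    rcases lt_trichotomy j₁ j₂ with hj | rfl | hj <;>
    (try have := three_mul_pow_le_pow hi) <;> (try have := three_mul_pow_le_pow hj) <;> omega

theorem add (h₁ : Corner k a₁ b₁) (h₂ : Corner k a₂ b₂) :
    ∃ a b, Corner (k + 1) a b ∧ a ≤ a₁ + a₂ ∧ b ≤ b₁ + b₂ := by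
  rcases eq_or_two_mul_le h₁ h₂ with ⟨rfl, rfl⟩ | h | h | h | h
  · obtain ⟨a, b, hc, ha, hb⟩ := h₁.exists_succ_le_two_mul
    exact ⟨a, b, hc, by omega, by omega⟩
  · exact ⟨_, _, h₁.succ_left, by omega, by omega⟩
  · exact ⟨_, _, h₂.succ_left, by omega, by omega⟩
  · exact ⟨_, _, h₁.succ_right, by omega, by omega⟩
  · exact ⟨_, _, h₂.succ_right, by omega, by omega⟩

theorem le_add (h : Corner k a b) :
    (if Even k then 2 * 3 ^ (k / 2) else 4 * 3 ^ ((k - 1) / 2)) ≤ a + b := by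
  obtain ⟨t, rfl | rfl⟩ := Nat.even_or_odd' k
  · rw [if_pos (even_two_mul t), Nat.mul_div_cancel_left t two_pos]
    rcases h with ⟨i, j, hk, rfl, rfl⟩ | ⟨i, j, hk, rfl, rfl⟩ <;>
      have := three_pow_add_three_pow_le i j
    · rw [show (i + j) / 2 = t by omega, show (i + j + 1) / 2 = t by omega] at this
      omega
    · rw [show (i + j) / 2 = t - 1 by omega, show (i + j + 1) / 2 = t - 1 + 1 by omega,
        pow_succ] at this
      rw [show t = t - 1 + 1 by omega, pow_succ]
      omega
  · rw [if_neg (Nat.not_even_iff_odd.mpr (odd_two_mul_add_one t)),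
      show (2 * t + 1 - 1) / 2 = t by omega]
    rcases h with ⟨i, j, hk, rfl, rfl⟩ | ⟨i, j, hk, rfl, rfl⟩ <;>
      have := three_pow_add_three_pow_le i j
    · rw [show (i + j) / 2 = t by omega, show (i + j + 1) / 2 = t + 1 by omega,
        pow_succ] at this
      omega
    · rw [show (i + j) / 2 = t by omega, show (i + j + 1) / 2 = t by omega] at this
      omega

end Corner

section Weight

variable {R G : Type*} [Semiring R] {x y : R[G]}

@[simp] theorem wt_eq_zero : wt x = 0 ↔ x = 0 := by
  simp [wt, MonoidAlgebra.coeff_eq_zero]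

theorem wt_pos : 0 < wt x ↔ x ≠ 0 := by
  rw [Nat.pos_iff_ne_zero, Ne, wt_eq_zero]

theorem wt_add_le (x y : R[G]) : wt (x + y) ≤ wt x + wt y := by
  classical
  exact (Finset.card_le_card Finsupp.support_add).trans (Finset.card_union_le _ _)

theorem wt_sum_le {ι : Type*} (s : Finset ι) (f : ι → R[G]) :
    wt (∑ i ∈ s, f i) ≤ ∑ i ∈ s, wt (f i) :=
  Finset.le_sum_of_subadditive wt (by simp) wt_add_le s f

theorem wt_add_of_disjoint (h : Disjoint x.coeff.support y.coeff.support) :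
    wt (x + y) = wt x + wt y := by
  classical
  rw [wt, MonoidAlgebra.coeff_add, Finsupp.support_add_eq h, Finset.card_union_of_disjoint h]
  rfl

theorem wt_mul_of [Group G] (x : R[G]) (g : G) : wt (x * of R G g) = wt x := by
  rw [wt, of_apply, support_coeff_mul_single x 1 (by simp) g, Finset.card_map]
  rfl

theorem wt_of [Nontrivial R] [MulOneClass G] (g : G) : wt (of R G g) = 1 := by
  simp [wt, of_apply]

theorem wt_one [Nontrivial R] [MulOneClass G] : wt (1 : R[G]) = 1 := by
  rw [← map_one (of R G), wt_of]

theorem wt_of_add_of [Nontrivial R] [MulOneClass G] {a b : G} (hab : a ≠ b) :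
    wt (of R G a + of R G b) = 2 := by
  classical
  rw [wt, coeff_add, of_apply, of_apply, coeff_single, coeff_single,
    Finsupp.support_single_add_single hab one_ne_zero one_ne_zero, Finset.card_pair hab]

theorem wt_of_add_of_add_of [Nontrivial R] [MulOneClass G] {a b c : G} (hab : a ≠ b) (hac : a ≠ c)
    (hbc : b ≠ c) : wt (of R G a + of R G b + of R G c) = 3 := by
  classical
  refine (wt_add_of_disjoint ?_).trans (by rw [wt_of_add_of hab, wt_of])
  rw [coeff_add, of_apply, of_apply, of_apply, coeff_single, coeff_single, coeff_single,
    Finsupp.support_single_add_single hab one_ne_zero one_ne_zero,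
    Finsupp.support_single _ one_ne_zero]
  simp [hac.symm, hbc.symm]

theorem wt_mul_of_injOn [NoZeroDivisors R] [Mul G]
    (h : (x.coeff.support ×ˢ y.coeff.support : Set (G × G)).InjOn fun p => p.1 * p.2) :
    wt (x * y) = wt x * wt y := by
  classical
  have hsupp : (x * y).coeff.support = x.coeff.support * y.coeff.support := by
    refine (support_coeff_mul_subset x y).antisymm fun g hg => ?_
    obtain ⟨a, ha, b, hb, rfl⟩ := Finset.mem_mul.mp hg
    have huniq : UniqueMul x.coeff.support y.coeff.support a b := fun a' b' ha' hb' he =>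
      Prod.ext_iff.mp <| h (x₁ := (a', b')) ⟨ha', hb'⟩ (x₂ := (a, b)) ⟨ha, hb⟩ he
    rw [Finsupp.mem_support_iff, coeff_mul_mul_of_uniqueMul huniq]
    exact mul_ne_zero (Finsupp.mem_support_iff.mp ha) (Finsupp.mem_support_iff.mp hb)
  rw [wt, hsupp, Finset.card_mul_iff.mpr h]
  rfl

theorem wt_add_wt_sum_erase_le {ι : Type*} [Fintype ι] [DecidableEq ι] (f : ι → R[G]) (j : ι) :
    wt (f j) + wt (∑ l ∈ Finset.univ.erase j, f l) ≤ ∑ l, wt (f l) := by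
  rw [← Finset.add_sum_erase _ _ (Finset.mem_univ j)]
  exact Nat.add_le_add_left (wt_sum_le _ _) _

end Weight

section Code

variable {R G : Type*} [CommSemiring R] [Monoid G] {u x : R[G]}

theorem mem_codeGen_iff : x ∈ codeGen u ↔ ∃ y, y * u = x := by
  rw [codeGen, show Set.range (fun g => of R G g * u) = LinearMap.mulRight R u '' Set.range (of R G)
    by rw [← Set.range_comp]; rfl, Submodule.span_image, Submodule.mem_map]
  refine ⟨fun ⟨y, _, hy⟩ => ⟨y, hy⟩, fun ⟨y, hy⟩ => ⟨y, ?_, hy⟩⟩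
  exact Submodule.span_mono (Set.image_subset_range _ _) (mem_span_support_coeff y)

theorem minDist_eq {d : ℕ} (hle : ∀ x ∈ codeGen u, x ≠ 0 → d ≤ wt x)
    (hex : ∃ x ∈ codeGen u, x ≠ 0 ∧ wt x = d) : minDist u = d :=
  le_antisymm (Nat.sInf_le hex) <| le_csInf ⟨d, hex⟩ fun _ ⟨x, hx, hx0, hwt⟩ => hwt ▸ hle x hx hx0

end Code

section Supported

variable {R G : Type*} [CommSemiring R]

variable (R) in
def supportedSubalgebra [Monoid G] (S : Submonoid G) : Subalgebra R R[G] :=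
  (supported R R (S : Set G)).toSubalgebra
    (fun g hg => by rw [Finset.mem_one.mp (support_coeff_one_subset hg)]; exact S.one_mem)
    fun x y hx hy => by
    classical
    intro g hg
    obtain ⟨a, ha, b, hb, rfl⟩ := Finset.mem_mul.mp (support_coeff_mul_subset x y hg)
    exact S.mul_mem (hx ha) (hy hb)

variable {x y : R[G]}

theorem mem_supportedSubalgebra [Monoid G] {S : Submonoid G} :
    x ∈ supportedSubalgebra R S ↔ ↑x.coeff.support ⊆ (S : Set G) := by
  rfl

theorem of_mem_supportedSubalgebra [Monoid G] {S : Submonoid G} {g : G} (hg : g ∈ S) :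
    of R G g ∈ supportedSubalgebra R S := by
  rw [mem_supportedSubalgebra, of_apply, coeff_single]
  exact (Finset.coe_subset.mpr Finsupp.support_single_subset).trans (by simpa using hg)

theorem wt_mul_of_disjoint [NoZeroDivisors R] [Group G] {K L : Subgroup G} (hKL : Disjoint K L)
    (hx : x ∈ supportedSubalgebra R K.toSubmonoid) (hy : y ∈ supportedSubalgebra R L.toSubmonoid) :
    wt (x * y) = wt x * wt y := by
  have hx' := mem_supportedSubalgebra.mp hx
  have hy' := mem_supportedSubalgebra.mp hy
  refine wt_mul_of_injOn fun ⟨a, b⟩ ⟨ha, hb⟩ ⟨a', b'⟩ ⟨ha', hb'⟩ he => ?_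
  have h1 : a'⁻¹ * a = b' * b⁻¹ := by
    simp only at he
    rw [inv_mul_eq_iff_eq_mul, ← mul_assoc, ← he, mul_assoc, mul_inv_cancel, mul_one]
  have h2 : a'⁻¹ * a = 1 := Subgroup.disjoint_def.mp hKL
    (K.mul_mem (K.inv_mem (hx' ha')) (hx' ha)) (h1 ▸ L.mul_mem (hy' hb') (L.inv_mem (hy' hb)))
  rw [h2, eq_comm, mul_inv_eq_one] at h1
  rw [inv_mul_eq_one] at h2
  simp [h1, h2]

theorem wt_add_mul_of_notMem [Group G] {K : Subgroup G} {z : R[G]} {g : G} (hg : g ∉ K)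
    (hx : x ∈ supportedSubalgebra R K.toSubmonoid) (hz : z ∈ supportedSubalgebra R K.toSubmonoid) :
    wt (x + z * of R G g) = wt x + wt z := by
  refine (wt_add_of_disjoint ?_).trans (by rw [wt_mul_of])
  rw [of_apply, support_coeff_mul_single z 1 (by simp) g, Finset.disjoint_left]
  intro a hax haz
  obtain ⟨b, hb, rfl⟩ := Finset.mem_map.mp haz
  exact hg <| (K.mul_mem_cancel_left (mem_supportedSubalgebra.mp hz hb)).mp
    (mem_supportedSubalgebra.mp hx hax)

end Supported

section Slice

variable {R G Q : Type*} [CommSemiring R] [Group G] [Group Q] [DecidableEq Q] (φ : G →* Q)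

def slice (q : Q) (x : R[G]) : R[G] :=
  ofCoeff (x.coeff.filter (φ · = q))

variable {φ} {x : R[G]} {q : Q}

theorem slice_add (x y : R[G]) : slice φ q (x + y) = slice φ q x + slice φ q y := by
  ext1; simp [slice]

theorem slice_sum {ι : Type*} (s : Finset ι) (f : ι → R[G]) :
    slice φ q (∑ i ∈ s, f i) = ∑ i ∈ s, slice φ q (f i) := by
  ext1; simp [slice, coeff_sum, Finsupp.filter_sum]

theorem support_slice : (slice φ q x).coeff.support = x.coeff.support.filter (φ · = q) :=
  Finsupp.support_filter _ _

theorem slice_ne_zero {g : G} (hg : g ∈ x.coeff.support) : slice φ (φ g) x ≠ 0 := by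
  intro h
  have : g ∈ (slice φ (φ g) x).coeff.support := by
    rw [support_slice, Finset.mem_filter]
    exact ⟨hg, rfl⟩
  simp [h] at this

theorem slice_mul_single (x : R[G]) (q : Q) (g : G) (r : R) :
    slice φ q (x * single g r) = slice φ (q * (φ g)⁻¹) x * single g r := by
  ext a
  simp only [slice, coeff_ofCoeff, coeff_mul_single_apply,
    Finsupp.filter_apply, map_mul, map_inv, eq_mul_inv_iff_mul_eq, inv_mul_cancel_right]
  split_ifs <;> simp

theorem slice_mul_of_mem_ker {w : R[G]} (hw : w ∈ supportedSubalgebra R φ.ker.toSubmonoid)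
    (x : R[G]) (q : Q) : slice φ q (x * w) = slice φ q x * w := by
  conv_lhs => rw [← sum_coeff_single w, Finsupp.sum, Finset.mul_sum, slice_sum]
  conv_rhs => rw [← sum_coeff_single w, Finsupp.sum, Finset.mul_sum]
  refine Finset.sum_congr rfl fun g hg => ?_
  rw [slice_mul_single, (mem_supportedSubalgebra.mp hw hg : φ g = 1), inv_one, mul_one]

theorem sum_wt_slice_le {ι : Type*} [Fintype ι] {c : ι → Q} (hc : Function.Injective c)
    (x : R[G]) : ∑ i, wt (slice φ (c i) x) ≤ wt x := by
  classical
  calc ∑ i, wt (slice φ (c i) x)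
      = (Finset.univ.biUnion fun i => (slice φ (c i) x).coeff.support).card := by
        refine (Finset.card_biUnion fun i _ j _ hij => ?_).symm
        simp only [support_slice, Finset.disjoint_filter]
        exact fun _ _ hi hj => hij (hc (hi.symm.trans hj))
    _ ≤ wt x := Finset.card_le_card <| Finset.biUnion_subset.mpr fun i _ => by
        rw [support_slice]; exact Finset.filter_subset _ _

theorem slice_one_mem (x : R[G]) : slice φ 1 x ∈ supportedSubalgebra R φ.ker.toSubmonoid :=
  mem_supportedSubalgebra.mpr fun g hg => by
    rw [Finset.mem_coe, support_slice, Finset.mem_filter] at hg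
    exact hg.2

theorem slice_add_slice {q₁ q₂ : Q} (hq : q₁ ≠ q₂) (h : ∀ g, φ g = q₁ ∨ φ g = q₂) (x : R[G]) :
    slice φ q₁ x + slice φ q₂ x = x := by
  ext g
  simp only [slice, coeff_add, Finsupp.coe_add, Pi.add_apply, Finsupp.filter_apply]
  rcases h g with h | h <;> simp [h, hq, hq.symm]

theorem exists_eq_add_mul_of {h : G} (hφ : ∀ g, φ g = 1 ∨ φ g = φ h) (hh : φ h ≠ 1) (x : R[G]) :
    ∃ x₀ ∈ supportedSubalgebra R φ.ker.toSubmonoid, ∃ x₁ ∈ supportedSubalgebra R φ.ker.toSubmonoid,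
      x = x₀ + x₁ * of R G h := by
  refine ⟨_, slice_one_mem x, _, slice_one_mem (x * of R G h⁻¹), ?_⟩
  rw [of_apply, slice_mul_single, one_mul, map_inv, inv_inv, mul_assoc, ← of_apply, ← map_mul,
    inv_mul_cancel, map_one, mul_one, slice_add_slice hh.symm hφ]

end Slice

section Trinomial

variable (R) {G : Type*} [CommRing R] [CommGroup G]

def trinomial (g : G) : R[G] :=
  of R G g + of R G g ^ 2 + of R G g ^ 3

variable {R} {g : G}

theorem two_eq_zero_of_charTwo [CharP R 2] : (2 : R[G]) = 0 := by
  rw [← map_ofNat (algebraMap R R[G]) 2, CharTwo.two_eq_zero, map_zero]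

theorem trinomial_sq [CharP R 2] (hg : g ^ 4 = 1) : trinomial R g ^ 2 = 1 := by
  have he : of R G g ^ 4 = 1 := by rw [← map_pow, hg, map_one]
  have h2 := two_eq_zero_of_charTwo (R := R) (G := G)
  rw [trinomial]
  linear_combination (1 + of R G g ^ 2) * he +
    (of R G g ^ 2 + of R G g ^ 3 + of R G g ^ 4 + of R G g ^ 5) * h2

theorem one_add_sq_mul_trinomial [CharP R 2] (hg : g ^ 4 = 1) :
    (1 + of R G g ^ 2) * trinomial R g = 1 + of R G g ^ 2 := by
  have he : of R G g ^ 4 = 1 := by rw [← map_pow, hg, map_one]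
  have h2 := two_eq_zero_of_charTwo (R := R) (G := G)
  rw [trinomial]
  linear_combination (1 + of R G g) * he + (of R G g + of R G g ^ 3) * h2

theorem trinomial_mem {S : Submonoid G} (hg : g ∈ S) : trinomial R g ∈ supportedSubalgebra R S := by
  have := of_mem_supportedSubalgebra (R := R) hg
  exact add_mem (add_mem this (pow_mem this 2)) (pow_mem this 3)

theorem wt_trinomial [Nontrivial R] (hg : orderOf g = 4) : wt (trinomial R g) = 3 := by
  have hne {a b : ℕ} (ha : a < 4) (hb : b < 4) (hab : a ≠ b) : g ^ a ≠ g ^ b :=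
    (hg ▸ pow_injOn_Iio_orderOf).ne ha hb hab
  rw [trinomial, ← map_pow, ← map_pow]
  refine wt_of_add_of_add_of ?_ ?_ ?_
  · simpa using hne (a := 1) (b := 2) (by norm_num) (by norm_num) (by norm_num)
  · simpa using hne (a := 1) (b := 3) (by norm_num) (by norm_num) (by norm_num)
  · exact hne (by norm_num) (by norm_num) (by norm_num)

theorem wt_one_add_sq [Nontrivial R] (hg : orderOf g = 4) : wt (1 + of R G g ^ 2) = 2 := by
  rw [← map_one (of R G), ← map_pow]
  refine wt_of_add_of ?_
  have := (hg ▸ pow_injOn_Iio_orderOf (x := g)).ne (x := 0) (y := 2) (by simp) (by simp)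
    (by norm_num)
  rwa [pow_zero] at this

end Trinomial

section CornerBounded

variable {R G : Type*} [CommRing R] [CommGroup G] {k : ℕ} {w : R[G]}

def CornerBounded (k : ℕ) (w : R[G]) : Prop :=
  ∀ x ≠ 0, ∃ a b, Corner k a b ∧ a ≤ wt x ∧ b ≤ wt (x * w)

theorem cornerBounded_one : CornerBounded 0 (1 : R[G]) := fun _ hx =>
  ⟨1, 1, Corner.zero, wt_pos.mpr hx, by rw [mul_one]; exact wt_pos.mpr hx⟩

variable [CharP R 2]

theorem CornerBounded.exists_corner_succ_of_ne (hw : CornerBounded k w) (p : Fin 4 → R[G])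
    {j : Fin 4} (hj : p j ≠ 0) (hqj : ∑ l, p l - p j ≠ 0) :
    ∃ a b, Corner (k + 1) a b ∧ a ≤ ∑ j, wt (p j) ∧ b ≤ ∑ j, wt ((∑ l, p l - p j) * w) := by
  classical
  set q := ∑ l, p l
  obtain ⟨a₁, b₁, h₁, ha₁, hb₁⟩ := hw _ hj
  obtain ⟨a₂, b₂, h₂, ha₂, hb₂⟩ := hw _ hqj
  obtain ⟨a, b, h, ha, hb⟩ := h₁.add h₂
  have hA : ∑ l ∈ Finset.univ.erase j, p l = q - p j :=
    Finset.sum_erase_eq_sub (Finset.mem_univ j)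
  have hB : ∑ l ∈ Finset.univ.erase j, (q - p l) * w = p j * w := by
    -- `∑_{l ≠ j} (q - p l) = 2 • q + p j`
    rw [Finset.sum_erase_eq_sub (Finset.mem_univ j), ← Finset.sum_mul, Finset.sum_sub_distrib,
      Finset.sum_const, Finset.card_univ, Fintype.card_fin, nsmul_eq_mul]
    linear_combination (q * w) * two_eq_zero_of_charTwo (R := R) (G := G)
  have hA' := wt_add_wt_sum_erase_le p j
  have hB' := wt_add_wt_sum_erase_le (fun l => (q - p l) * w) j
  rw [hA] at hA'
  rw [hB] at hB'
  exact ⟨a, b, h, by omega, by omega⟩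

theorem CornerBounded.exists_corner_succ_of_forall (hw : CornerBounded k w) (p : Fin 4 → R[G])
    (hp : p ≠ 0) (hq : ∀ j, p j ≠ 0 → ∑ l, p l - p j = 0) :
    ∃ a b, Corner (k + 1) a b ∧ a ≤ ∑ j, wt (p j) ∧ b ≤ ∑ j, wt ((∑ l, p l - p j) * w) := by
  classical
  set q := ∑ l, p l
  set T := Finset.univ.filter fun j => p j ≠ 0
  have hpT (j : Fin 4) : p j = if j ∈ T then q else 0 := by
    by_cases hj : p j = 0
    · simp [T, hj]
    · simpa [T, hj] using (sub_eq_zero.mp (hq j hj)).symm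
  obtain ⟨j₀, hj₀⟩ := Function.ne_iff.mp hp
  have hq0 : q ≠ 0 := by rwa [← sub_eq_zero.mp (hq j₀ hj₀)] at hj₀
  obtain ⟨a, b, hc, ha, hb⟩ := hw q hq0
  have hA : ∑ j, wt (p j) = T.card * wt q := by
    have (j : Fin 4) : wt (p j) = if j ∈ T then wt q else 0 := by
      rw [hpT j]; split_ifs <;> simp
    simp only [this, Finset.sum_ite_mem, Finset.univ_inter, Finset.sum_const, smul_eq_mul]
  have hB : ∑ j, wt ((q - p j) * w) = (4 - T.card) * wt (q * w) := by
    have (j : Fin 4) : wt ((q - p j) * w) = if j ∈ Tᶜ then wt (q * w) else 0 := by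
      rw [hpT j]; by_cases hj : j ∈ T <;> simp [hj]
    simp only [this, Finset.sum_ite_mem, Finset.univ_inter, Finset.sum_const, smul_eq_mul,
      Finset.card_compl, Fintype.card_fin]
  -- In characteristic `2`, `q = #T • q ≠ 0` forces `#T` to be odd.
  have hT : T.card = 1 ∨ T.card = 3 := by
    have hqT : q = T.card • q := calc
      q = ∑ j, if j ∈ T then q else 0 := Finset.sum_congr rfl fun j _ => hpT j
      _ = T.card • q := by rw [Finset.sum_ite_mem, Finset.univ_inter, Finset.sum_const]
    have := T.card_le_univ
    rw [Fintype.card_fin] at this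
    obtain ⟨c, hcT | hcT⟩ := Nat.even_or_odd' T.card
    · refine absurd ?_ hq0
      rw [hqT, nsmul_eq_mul, hcT, Nat.cast_mul, Nat.cast_ofNat, two_eq_zero_of_charTwo, zero_mul,
        zero_mul]
    · omega
  rcases hT with hT | hT
  · exact ⟨a, 3 * b, hc.succ_right, by rw [hA, hT]; omega, by rw [hB, hT]; omega⟩
  · exact ⟨3 * a, b, hc.succ_left, by rw [hA, hT]; omega, by rw [hB, hT]; omega⟩

theorem CornerBounded.exists_corner_succ (hw : CornerBounded k w) (p : Fin 4 → R[G]) (hp : p ≠ 0) :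
    ∃ a b, Corner (k + 1) a b ∧ a ≤ ∑ j, wt (p j) ∧ b ≤ ∑ j, wt ((∑ l, p l - p j) * w) := by
  by_cases h : ∃ j, p j ≠ 0 ∧ ∑ l, p l - p j ≠ 0
  · obtain ⟨j, hj, hqj⟩ := h
    exact hw.exists_corner_succ_of_ne p hj hqj
  · push Not at h
    exact hw.exists_corner_succ_of_forall p hp h

end CornerBounded

section Step

variable {R G Q : Type*} [CommRing R] [CommGroup G] [Group Q] [DecidableEq Q]

def shiftedSlice (φ : G →* Q) (g₀ g : G) (x : R[G]) (j : Fin 4) : R[G] :=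
  slice φ (φ (g₀ * g ^ (j : ℕ))) x * of R G (g₀ * g ^ (j : ℕ))⁻¹

variable {φ : G →* Q} {g₀ g : G} {x w : R[G]}

theorem slice_eq_shiftedSlice_mul (j : Fin 4) :
    slice φ (φ (g₀ * g ^ (j : ℕ))) x = shiftedSlice φ g₀ g x j * of R G (g₀ * g ^ (j : ℕ)) := by
  rw [shiftedSlice, mul_assoc, ← map_mul, inv_mul_cancel, map_one, mul_one]

theorem mul_pow_sub_mul_pow (hg : g ^ 4 = 1) (j l : Fin 4) :
    g₀ * g ^ ((j - l : Fin 4) : ℕ) * g ^ (l : ℕ) = g₀ * g ^ (j : ℕ) := by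
  rw [mul_assoc, ← pow_add, pow_eq_pow_mod _ hg, ← Fin.val_add, sub_add_cancel]

theorem slice_mul_of_pow (hg : g ^ 4 = 1) (x : R[G]) (j l : Fin 4) :
    slice φ (φ (g₀ * g ^ (j : ℕ))) (x * of R G (g ^ (l : ℕ))) =
      shiftedSlice φ g₀ g x (j - l) * of R G (g₀ * g ^ (j : ℕ)) := by
  rw [of_apply, slice_mul_single, ← mul_pow_sub_mul_pow (g₀ := g₀) hg j l, map_mul,
    mul_inv_cancel_right, slice_eq_shiftedSlice_mul, ← of_apply, mul_assoc, ← map_mul]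

theorem slice_mul_trinomial_mul (hg : g ^ 4 = 1)
    (hw : w ∈ supportedSubalgebra R φ.ker.toSubmonoid) (x : R[G]) (j : Fin 4) :
    slice φ (φ (g₀ * g ^ (j : ℕ))) (x * (trinomial R g * w)) =
      ((∑ l, shiftedSlice φ g₀ g x l - shiftedSlice φ g₀ g x j) * w) *
        of R G (g₀ * g ^ (j : ℕ)) := by
  set p := shiftedSlice φ g₀ g x
  have hsum : ∑ l, p l = p j + p (j - 1) + p (j - 2) + p (j - 3) := by
    rw [← (Equiv.subLeft j).sum_comp, Fin.sum_univ_four]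
    simp
  have hx : x * (trinomial R g * w) =
      (x * of R G (g ^ ((1 : Fin 4) : ℕ)) + x * of R G (g ^ ((2 : Fin 4) : ℕ)) +
        x * of R G (g ^ ((3 : Fin 4) : ℕ))) * w := by
    have h3 : ((3 : Fin 4) : ℕ) = 3 := rfl
    simp only [trinomial, map_pow, Fin.val_one, Fin.val_two, h3, pow_one]
    ring
  rw [hx, slice_mul_of_mem_ker hw, slice_add, slice_add, slice_mul_of_pow hg,
    slice_mul_of_pow hg, slice_mul_of_pow hg, hsum]
  ring

theorem CornerBounded.trinomial_mul [CharP R 2] {k : ℕ} (hg : g ^ 4 = 1)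
    (hφg : orderOf (φ g) = 4) (hwφ : w ∈ supportedSubalgebra R φ.ker.toSubmonoid)
    (hw : CornerBounded k w) : CornerBounded (k + 1) (trinomial R g * w) := by
  intro x hx
  obtain ⟨g₀, hg₀⟩ : x.coeff.support.Nonempty := by simpa [coeff_eq_zero] using hx
  have hinj : Function.Injective fun j : Fin 4 => φ (g₀ * g ^ (j : ℕ)) := by
    intro i j hij
    simp only [map_mul, map_pow, mul_right_inj] at hij
    exact Fin.ext (pow_injOn_Iio_orderOf (by simp [hφg]) (by simp [hφg]) hij)
  have hp : shiftedSlice φ g₀ g x ≠ 0 := by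
    refine Function.ne_iff.mpr ⟨0, fun h => slice_ne_zero (φ := φ) hg₀ ?_⟩
    simpa [h] using slice_eq_shiftedSlice_mul (φ := φ) (g₀ := g₀) (g := g) (x := x) 0
  obtain ⟨a, b, hc, ha, hb⟩ := hw.exists_corner_succ _ hp
  refine ⟨a, b, hc, ha.trans ?_, hb.trans ?_⟩
  · calc _ = ∑ j : Fin 4, wt (slice φ (φ (g₀ * g ^ (j : ℕ))) x) := by
          simp only [slice_eq_shiftedSlice_mul, wt_mul_of]
      _ ≤ wt x := sum_wt_slice_le hinj x
  · calc _ = ∑ j : Fin 4, wt (slice φ (φ (g₀ * g ^ (j : ℕ))) (x * (trinomial R g * w))) := by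
          simp only [slice_mul_trinomial_mul hg hwφ, wt_mul_of]
      _ ≤ _ := sum_wt_slice_le hinj _

end Step

section Intertwined

variable {n m : ℕ}

def coordHom (i : Fin m) : Gp n m →* Multiplicative (ZMod (4 * n)) :=
  AddMonoidHom.toMultiplicative
    ((Pi.evalAddMonoidHom (fun _ => ZMod (4 * n)) i).comp (AddMonoidHom.fst _ _))

def axisHom (i : Fin m) : Multiplicative (ZMod (4 * n)) →* Gp n m :=
  AddMonoidHom.toMultiplicative
    ((AddMonoidHom.inl _ _).comp (AddMonoidHom.single (fun _ => ZMod (4 * n)) i))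

variable (n m) in
def parityHom : Gp n m →* Multiplicative (ZMod 2) :=
  AddMonoidHom.toMultiplicative (AddMonoidHom.snd _ _)

theorem coordHom_agen (i j : Fin m) :
    coordHom i (agen n m j) = if j = i then Multiplicative.ofAdd 1 else 1 := by
  by_cases h : j = i
  · subst h; simp [coordHom, agen]
  · simp [coordHom, agen, h]

theorem parityHom_agen (i : Fin m) : parityHom n m (agen n m i) = 1 := rfl

theorem parityHom_hgen : parityHom n m (hgen n m) = Multiplicative.ofAdd 1 := rfl

theorem agen_mem_range_axisHom (i : Fin m) : agen n m i ∈ (axisHom (n := n) i).range :=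
  ⟨Multiplicative.ofAdd 1, rfl⟩

theorem disjoint_range_axisHom_ker_coordHom (i : Fin m) :
    Disjoint (axisHom (n := n) i).range (coordHom i).ker := by
  rw [Subgroup.disjoint_def]
  rintro _ ⟨c, rfl⟩ hc
  have : c = 1 := by simpa [axisHom, coordHom] using hc
  rw [this, map_one]

theorem agen_pow_mem_ker_coordHom {i j : Fin m} (h : j ≠ i) :
    agen n m j ^ n ∈ (coordHom i).ker := by
  rw [MonoidHom.mem_ker, map_pow, coordHom_agen, if_neg h, one_pow]

theorem agen_pow_mem_ker_parityHom (i : Fin m) : agen n m i ^ n ∈ (parityHom n m).ker := by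
  rw [MonoidHom.mem_ker, map_pow, parityHom_agen, one_pow]

theorem hgen_notMem_ker_parityHom : hgen n m ∉ (parityHom n m).ker := by
  rw [MonoidHom.mem_ker, parityHom_hgen]
  decide

theorem parityHom_eq_one_or (g : Gp n m) :
    parityHom n m g = 1 ∨ parityHom n m g = parityHom n m (hgen n m) := by
  rw [parityHom_hgen]
  generalize parityHom n m g = x
  revert x
  decide

theorem hgen_mul_hgen : hgen n m * hgen n m = 1 := by
  rw [hgen, ← ofAdd_add, Prod.mk_add_mk, add_zero]
  rfl

theorem agen_pow_pow_four (i : Fin m) : (agen n m i ^ n) ^ 4 = 1 := by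
  rw [← pow_mul, Nat.mul_comm n 4, agen, ← ofAdd_nsmul, Prod.smul_mk, smul_zero,
    ← Pi.single_smul, nsmul_eq_mul, mul_one, ZMod.natCast_self, Pi.single_zero]
  rfl

theorem orderOf_coordHom_agen_pow (hn : 1 ≤ n) (i : Fin m) :
    orderOf (coordHom i (agen n m i ^ n)) = 4 := by
  rw [map_pow, coordHom_agen, if_pos rfl, ← ofAdd_nsmul, orderOf_ofAdd_eq_addOrderOf, nsmul_one,
    ZMod.addOrderOf_coe _ (by omega), Nat.gcd_mul_left_left, Nat.mul_div_cancel _ (by omega)]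

theorem orderOf_agen_pow (hn : 1 ≤ n) (i : Fin m) : orderOf (agen n m i ^ n) = 4 :=
  Nat.dvd_antisymm (orderOf_dvd_of_pow_eq_one (agen_pow_pow_four i))
    ((orderOf_coordHom_agen_pow hn i).symm.dvd.trans (orderOf_map_dvd _ _))

theorem um_eq_prod_trinomial : um n m = ∏ i, trinomial (ZMod 2) (agen n m i ^ n) := by
  simp only [um, trinomial, map_pow, ← pow_mul, mul_comm n]

theorem prod_trinomial_mem {S : Submonoid (Gp n m)} {T : Finset (Fin m)}
    (h : ∀ i ∈ T, agen n m i ^ n ∈ S) :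
    ∏ i ∈ T, trinomial (ZMod 2) (agen n m i ^ n) ∈ supportedSubalgebra (ZMod 2) S :=
  Subalgebra.prod_mem _ fun i hi => trinomial_mem (h i hi)

theorem prod_trinomial_mul_um (T : Finset (Fin m)) :
    (∏ i ∈ T, trinomial (ZMod 2) (agen n m i ^ n)) * um n m =
      ∏ i ∈ Tᶜ, trinomial (ZMod 2) (agen n m i ^ n) := by
  rw [um_eq_prod_trinomial, ← T.prod_mul_prod_compl, ← mul_assoc, ← Finset.prod_mul_distrib]
  simp [← sq, trinomial_sq (agen_pow_pow_four _)]

theorem um_mul_um : um n m * um n m = 1 := by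
  simpa [← um_eq_prod_trinomial] using prod_trinomial_mul_um (n := n) (m := m) Finset.univ

theorem prod_trinomial_mem_ker_parityHom (T : Finset (Fin m)) :
    ∏ i ∈ T, trinomial (ZMod 2) (agen n m i ^ n) ∈
      supportedSubalgebra (ZMod 2) (parityHom n m).ker.toSubmonoid :=
  prod_trinomial_mem fun i _ => agen_pow_mem_ker_parityHom i

theorem um_mem : um n m ∈ supportedSubalgebra (ZMod 2) (parityHom n m).ker.toSubmonoid :=
  um_eq_prod_trinomial (n := n) ▸ prod_trinomial_mem_ker_parityHom Finset.univ

theorem cornerBounded_prod_trinomial (hn : 1 ≤ n) (T : Finset (Fin m)) :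
    CornerBounded T.card (∏ i ∈ T, trinomial (ZMod 2) (agen n m i ^ n)) := by
  induction T using Finset.induction_on with
  | empty => simpa using cornerBounded_one
  | insert i T hi ih =>
    rw [Finset.prod_insert hi, Finset.card_insert_of_notMem hi]
    exact ih.trinomial_mul (φ := coordHom i) (agen_pow_pow_four i)
      (orderOf_coordHom_agen_pow hn i)
      (prod_trinomial_mem fun j hj => agen_pow_mem_ker_coordHom (ne_of_mem_of_not_mem hj hi))

theorem wt_mul_prod_trinomial {T : Finset (Fin m)} {i : Fin m} (hi : i ∉ T) {z : (ZMod 2)[Gp n m]}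
    (hz : z ∈ supportedSubalgebra (ZMod 2) (axisHom i).range.toSubmonoid) :
    wt (z * ∏ j ∈ T, trinomial (ZMod 2) (agen n m j ^ n)) =
      wt z * wt (∏ j ∈ T, trinomial (ZMod 2) (agen n m j ^ n)) :=
  wt_mul_of_disjoint (disjoint_range_axisHom_ker_coordHom i) hz
    (prod_trinomial_mem fun _ hj => agen_pow_mem_ker_coordHom (ne_of_mem_of_not_mem hj hi))

theorem wt_prod_trinomial (hn : 1 ≤ n) (T : Finset (Fin m)) :
    wt (∏ i ∈ T, trinomial (ZMod 2) (agen n m i ^ n)) = 3 ^ T.card := by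
  induction T using Finset.induction_on with
  | empty => simp [wt_one]
  | insert i T hi ih =>
    rw [Finset.prod_insert hi, wt_mul_prod_trinomial hi
      (trinomial_mem (pow_mem (agen_mem_range_axisHom i) n)), wt_trinomial (orderOf_agen_pow hn i),
      ih, Finset.card_insert_of_notMem hi, pow_succ']

theorem wt_mul_uu {r : (ZMod 2)[Gp n m]}
    (hr : r ∈ supportedSubalgebra (ZMod 2) (parityHom n m).ker.toSubmonoid) :
    wt (r * uu n m) = wt r + wt (r * um n m) := by
  rw [show r * uu n m = r + r * um n m * of _ _ (hgen n m) by rw [uu]; ring]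
  exact wt_add_mul_of_notMem hgen_notMem_ker_parityHom hr (mul_mem hr um_mem)

theorem exists_mul_uu_eq (y : (ZMod 2)[Gp n m]) :
    ∃ r ∈ supportedSubalgebra (ZMod 2) (parityHom n m).ker.toSubmonoid,
      y * uu n m = r * uu n m := by
  obtain ⟨y₀, hy₀, y₁, hy₁, rfl⟩ :=
    exists_eq_add_mul_of parityHom_eq_one_or (hgen_notMem_ker_parityHom (n := n) (m := m)) y
  refine ⟨y₀ + y₁ * um n m, add_mem hy₀ (mul_mem hy₁ um_mem), ?_⟩
  have hh : of (ZMod 2) _ (hgen n m) * of (ZMod 2) _ (hgen n m) = 1 := by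
    rw [← map_mul, hgen_mul_hgen, map_one]
  rw [uu]
  linear_combination (y₁ * um n m) * hh - (y₁ * of (ZMod 2) _ (hgen n m)) * um_mul_um

theorem le_wt_of_mem_codeGen (hn : 1 ≤ n) {c : (ZMod 2)[Gp n m]} (hc : c ∈ codeGen (uu n m))
    (hc0 : c ≠ 0) : (if Even m then 2 * 3 ^ (m / 2) else 4 * 3 ^ ((m - 1) / 2)) ≤ wt c := by
  obtain ⟨y, rfl⟩ := mem_codeGen_iff.mp hc
  obtain ⟨r, hr, hyr⟩ := exists_mul_uu_eq y
  have hr0 : r ≠ 0 := by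
    rintro rfl
    exact hc0 (by rw [hyr, zero_mul])
  have hum : CornerBounded m (um n m) := by
    simpa [um_eq_prod_trinomial] using cornerBounded_prod_trinomial (m := m) hn Finset.univ
  obtain ⟨a, b, hab, ha, hb⟩ := hum r hr0
  rw [hyr, wt_mul_uu hr]
  exact hab.le_add.trans (add_le_add ha hb)

theorem exists_wt_eq_of_even (hn : 1 ≤ n) (he : Even m) :
    ∃ r ∈ supportedSubalgebra (ZMod 2) (parityHom n m).ker.toSubmonoid,
      wt r = 3 ^ (m / 2) ∧ wt (r * um n m) = 3 ^ (m / 2) := by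
  obtain ⟨T, -, hT⟩ := Finset.exists_subset_card_eq (s := (Finset.univ : Finset (Fin m)))
    (n := m / 2) (by rw [Finset.card_univ, Fintype.card_fin]; omega)
  refine ⟨_, prod_trinomial_mem_ker_parityHom T, ?_, ?_⟩
  · rw [wt_prod_trinomial hn, hT]
  · rw [prod_trinomial_mul_um, wt_prod_trinomial hn, Finset.card_compl, hT, Fintype.card_fin,
      show m - m / 2 = m / 2 by grind]

theorem exists_wt_eq_of_odd (hn : 1 ≤ n) (ho : Odd m) :
    ∃ r ∈ supportedSubalgebra (ZMod 2) (parityHom n m).ker.toSubmonoid,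
      wt r = 2 * 3 ^ (m / 2) ∧ wt (r * um n m) = 2 * 3 ^ (m / 2) := by
  set i₀ : Fin m := ⟨0, ho.pos⟩
  obtain ⟨T, hTs, hT⟩ := Finset.exists_subset_card_eq (s := Finset.univ.erase i₀) (n := m / 2)
    (by simp; omega)
  have hi₀ : i₀ ∉ T := fun h => by simpa using hTs h
  set z := 1 + of (ZMod 2) _ (agen n m i₀ ^ n) ^ 2
  have hz : z ∈ supportedSubalgebra (ZMod 2) (axisHom i₀).range.toSubmonoid :=
    add_mem (one_mem _) (pow_mem (of_mem_supportedSubalgebra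
      (pow_mem (agen_mem_range_axisHom i₀) n)) 2)
  have hz' : z ∈ supportedSubalgebra (ZMod 2) (parityHom n m).ker.toSubmonoid :=
    add_mem (one_mem _) (pow_mem (of_mem_supportedSubalgebra (agen_pow_mem_ker_parityHom i₀)) 2)
  have hmul : z * (∏ i ∈ T, trinomial (ZMod 2) (agen n m i ^ n)) * um n m =
      z * ∏ i ∈ Tᶜ.erase i₀, trinomial (ZMod 2) (agen n m i ^ n) := by
    rw [mul_assoc, prod_trinomial_mul_um, ← Finset.mul_prod_erase Tᶜ _ (Finset.mem_compl.mpr hi₀),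
      ← mul_assoc, one_add_sq_mul_trinomial (agen_pow_pow_four i₀)]
  refine ⟨_, mul_mem hz' (prod_trinomial_mem_ker_parityHom T), ?_, ?_⟩
  · rw [wt_mul_prod_trinomial hi₀ hz, wt_one_add_sq (orderOf_agen_pow hn i₀),
      wt_prod_trinomial hn, hT]
  · rw [hmul, wt_mul_prod_trinomial (Finset.notMem_erase i₀ _) hz,
      wt_one_add_sq (orderOf_agen_pow hn i₀), wt_prod_trinomial hn,
      Finset.card_erase_of_mem (Finset.mem_compl.mpr hi₀), Finset.card_compl, hT,
      Fintype.card_fin, show m - m / 2 - 1 = m / 2 by grind]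

theorem exists_wt_add_wt_mul_um_eq (hn : 1 ≤ n) :
    ∃ r ∈ supportedSubalgebra (ZMod 2) (parityHom n m).ker.toSubmonoid,
      wt r + wt (r * um n m) = if Even m then 2 * 3 ^ (m / 2) else 4 * 3 ^ ((m - 1) / 2) := by
  rcases Nat.even_or_odd m with he | ho
  · obtain ⟨r, hr, h₁, h₂⟩ := exists_wt_eq_of_even hn he
    exact ⟨r, hr, by rw [h₁, h₂, if_pos he]; ring⟩
  · obtain ⟨r, hr, h₁, h₂⟩ := exists_wt_eq_of_odd hn ho
    refine ⟨r, hr, ?_⟩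
    rw [h₁, h₂, if_neg (Nat.not_even_iff_odd.mpr ho), show (m - 1) / 2 = m / 2 by grind]
    ring

end Intertwined

theorem distance_of_intertwined_code_general (n m : ℕ) (hn : 1 ≤ n) :
    minDist (uu n m) =
      if Even m then 2 * 3 ^ (m / 2) else 4 * 3 ^ ((m - 1) / 2) := by
  obtain ⟨r, hr, hwt⟩ := exists_wt_add_wt_mul_um_eq (m := m) hn
  refine minDist_eq (fun c hc hc0 => le_wt_of_mem_codeGen hn hc hc0)
    ⟨r * uu n m, mem_codeGen_iff.mpr ⟨r, rfl⟩, ?_, by rw [wt_mul_uu hr, hwt]⟩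
  rw [← wt_pos, wt_mul_uu hr, hwt]
  split_ifs <;> positivity

theorem distance_of_intertwined_code (n m : ℕ) (hn : 1 ≤ n) (hm : 1 ≤ m) :
    minDist (uu n m) =
      if Even m then 2 * 3 ^ (m / 2) else 4 * 3 ^ ((m - 1) / 2) :=
  distance_of_intertwined_code_general n m hn
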